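/- arXiv:1101.4814 — 5 statements merged into one kernel-verified Lean document; each statement's English description precedes it below -/
import Mathlib

section
/- Let k ≥ 3, let q be a prime with q ≡ 1 (mod k), and let u ∈ (ℤ/qℤ)ˣ have multiplicative order k. Let G = ⟨h⟩ ⋊ ⟨g⟩ ≅ C_q ⋊ C_k with relations h^q = 1, g^k = 1, g⁻¹hg = h^u. Set a = g and b = g⁻¹h. Then G = ⟨a, b⟩, and the smallest normal subgroup N of G such that swapping a and b induces an automorphism of G/N satisfies G/N ≅ C_k; in particular |G|/|N| = k and N ≠ 1. -/
section Aux
variable {Γ : Type*} [Group Γ]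

lemma aux_conj {a h : Γ} {v : ℕ} (hrel : a⁻¹ * h * a = h ^ v) (m : ℤ) :
    h ^ m * a = a * h ^ ((v : ℤ) * m) := by
  have h1 : a⁻¹ * h ^ m * a = (a⁻¹ * h * a) ^ m := by
    have := conj_zpow (i := m) (a := a⁻¹) (b := h)
    rw [inv_inv] at this
    rw [this]
  have h2 : (a⁻¹ * h * a) ^ m = h ^ ((v : ℤ) * m) := by
    rw [hrel, ← zpow_natCast h v, ← zpow_mul]
  have h3 := h1.trans h2
  calc h ^ m * a = a * (a⁻¹ * h ^ m * a) := by group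
    _ = a * h ^ ((v : ℤ) * m) := by rw [h3]

lemma aux_conjj {a h : Γ} {v : ℕ} (hrel : a⁻¹ * h * a = h ^ v) :
    ∀ (j : ℕ) (m : ℤ), h ^ m * a ^ j = a ^ j * h ^ ((v : ℤ) ^ j * m) := by
  intro j
  induction j with
  | zero => intro m; simp
  | succ n ih =>
    intro m
    rw [pow_succ a n, ← mul_assoc, ih m, mul_assoc, aux_conj hrel, ← mul_assoc, ← pow_succ]
    congr 1
    ring

lemma aux_nf {a h : Γ} {k v : ℕ} (hk : 1 ≤ k) (ha : a ^ k = 1)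
    (hrel : a⁻¹ * h * a = h ^ v) (x : Γ) (hx : x ∈ Subgroup.closure {a, h}) :
    ∃ (j : ℕ) (m : ℤ), x = a ^ j * h ^ m := by
  have hainv : ∀ j : ℕ, (a ^ j)⁻¹ = a ^ (j * (k - 1)) := by
    intro j
    symm
    apply eq_inv_of_mul_eq_one_left
    rw [← pow_add]
    have e : j * (k - 1) + j = k * j := by
      cases k with
      | zero => omega
      | succ k' => simp [Nat.mul_succ, Nat.mul_comm, Nat.succ_mul]
    rw [e, pow_mul, ha, one_pow]
  induction hx using Subgroup.closure_induction with
  | mem g hg =>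
    rcases hg with rfl | rfl
    · exact ⟨1, 0, by simp⟩
    · exact ⟨0, 1, by simp⟩
  | one => exact ⟨0, 0, by simp⟩
  | mul x y hx hy ihx ihy =>
    obtain ⟨j, m, rfl⟩ := ihx
    obtain ⟨l, n, rfl⟩ := ihy
    refine ⟨j + l, (v : ℤ) ^ l * m + n, ?_⟩
    rw [mul_assoc, ← mul_assoc (h ^ m), aux_conjj hrel l m, pow_add, zpow_add]
    group
  | inv x hx ihx =>
    obtain ⟨j, m, rfl⟩ := ihx
    refine ⟨j * (k - 1), (v : ℤ) ^ (j * (k - 1)) * (-m), ?_⟩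
    rw [mul_inv_rev, hainv j, ← zpow_neg, aux_conjj hrel (j * (k - 1)) (-m)]

lemma aux_swap {Q : Type*} [Group Q] {a h : Q} {k v : ℕ} (hk : 1 ≤ k)
    (ha : a ^ k = 1) (hrel : a⁻¹ * h * a = h ^ v)
    (φ : Q ≃* Q) (hφa : φ a = a⁻¹ * h) (hφb : φ (a⁻¹ * h) = a) :
    h ^ (v ^ k) = h ^ (v * v) := by
  have hak1 : a ^ (k - 1) = a⁻¹ := by
    apply eq_inv_of_mul_eq_one_left
    rw [← pow_succ, Nat.sub_add_cancel hk, ha]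
  have hφh : φ h = h ^ v := by
    have h1 : φ (a * (a⁻¹ * h)) = a⁻¹ * h * a := by rw [map_mul, hφa, hφb]
    have h2 : a * (a⁻¹ * h) = h := by group
    rw [h2] at h1
    rw [h1, hrel]
  have key : (a⁻¹ * h)⁻¹ * h ^ v * (a⁻¹ * h) = h ^ (v * v) := by
    have h1 := congrArg φ hrel
    rw [map_mul, map_mul, map_inv, map_pow, hφa, hφh, ← pow_mul] at h1
    exact h1
  have hc := aux_conjj hrel (k - 1) (v : ℤ)
  rw [hak1] at hc
  have lhs_eq : (a⁻¹ * h)⁻¹ * h ^ v * (a⁻¹ * h) = h ^ ((v : ℤ) ^ (k - 1) * (v : ℤ)) := by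
    calc (a⁻¹ * h)⁻¹ * h ^ v * (a⁻¹ * h)
        = h⁻¹ * (a * (h ^ (v : ℤ) * a⁻¹)) * h := by rw [zpow_natCast]; group
      _ = h⁻¹ * (a * (a⁻¹ * h ^ ((v : ℤ) ^ (k - 1) * (v : ℤ)))) * h := by rw [hc]
      _ = h ^ ((v : ℤ) ^ (k - 1) * (v : ℤ)) := by group
  have hmain : h ^ ((v : ℤ) ^ (k - 1) * (v : ℤ)) = h ^ (v * v) := by rw [← lhs_eq, key]
  have e : (v : ℤ) ^ (k - 1) * (v : ℤ) = ((v ^ k : ℕ) : ℤ) := by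
    push_cast
    rw [← pow_succ, Nat.sub_add_cancel hk]
  rw [e, zpow_natCast] at hmain
  exact hmain

end Aux

/-- Swapping `a` and `b` induces an automorphism of `G ⧸ N`. -/
def swapInducesAut {G : Type*} [Group G] (a b : G) (N : Subgroup G) (hN : N.Normal) :
    Prop := by
  letI := hN
  exact ∃ φ : (G ⧸ N) ≃* (G ⧸ N),
    φ (QuotientGroup.mk a) = QuotientGroup.mk b ∧
    φ (QuotientGroup.mk b) = QuotientGroup.mk a

/-- `G ⧸ N` is isomorphic to `T`. -/
def quotIsoTo {G : Type*} [Group G] (N : Subgroup G) (hN : N.Normal)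
    (T : Type*) [Group T] : Prop := by
  letI := hN
  exact Nonempty ((G ⧸ N) ≃* T)

/-- Relators of `C_q ⋊ C_k = ⟨g,h | h^q = 1, g^k = 1, g⁻¹hg = h^u⟩`,
with generator `0` for `g` and `1` for `h`. -/
def semidirectRels (k q u : ℕ) : Set (FreeGroup (Fin 2)) :=
  {FreeGroup.of 1 ^ q, FreeGroup.of 0 ^ k,
   (FreeGroup.of 0)⁻¹ * FreeGroup.of 1 * FreeGroup.of 0 * (FreeGroup.of 1 ^ u)⁻¹}

/-- For `k ≥ 3`, a prime `q ≡ 1 (mod k)` and `u` of multiplicative order `k` mod `q`,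
the group `G = C_q ⋊ C_k` with `a = g`, `b = g⁻¹h` is generated by `a, b`, and the
smallest normal subgroup `N` such that swapping `a` and `b` induces an automorphism of
`G ⧸ N` satisfies `G ⧸ N ≅ C_k`; in particular `|G|/|N| = k` and `N ≠ 1`. -/
theorem stmt_5 (k q : ℕ) (hk : 3 ≤ k) (hq : q.Prime) (hmod : q % k = 1)
    (u : (ZMod q)ˣ) (hu : orderOf u = k) :
    letI G := PresentedGroup (semidirectRels k q ((u : ZMod q).val))
    letI a : G := PresentedGroup.of 0
    letI b : G := (PresentedGroup.of 0)⁻¹ * PresentedGroup.of 1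
    Subgroup.closure {a, b} = (⊤ : Subgroup G) ∧
    ∃ (N : Subgroup G) (hN : N.Normal),
      swapInducesAut a b N hN ∧
      (∀ (M : Subgroup G) (hM : M.Normal), swapInducesAut a b M hM → N ≤ M) ∧
      quotIsoTo N hN (Multiplicative (ZMod k)) ∧
      N.index = k ∧ N ≠ ⊥ := by
  haveI : NeZero k := ⟨by omega⟩
  haveI hqp : Fact q.Prime := ⟨hq⟩
  set v : ℕ := (u : ZMod q).val with hv
  set rels : Set (FreeGroup (Fin 2)) := semidirectRels k q v with hrels
  set G := PresentedGroup rels with hG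
  set a : G := PresentedGroup.of 0 with hadef
  set h : G := PresentedGroup.of 1 with hhdef
  have hk1 : 1 ≤ k := by omega
  -- basic facts about v
  have hvq : (v : ZMod q) = (u : ZMod q) := by
    rw [hv, ZMod.natCast_val, ZMod.cast_id]
  have hv1 : 1 ≤ v := by
    rcases Nat.eq_zero_or_pos v with h0 | h1
    · exfalso
      have : (u : ZMod q) = 0 := by rw [← hvq, h0, Nat.cast_zero]
      exact u.ne_zero this
    · exact h1
  -- relators
  have hr1 : FreeGroup.of 1 ^ q ∈ rels := Set.mem_insert _ _
  have hr2 : FreeGroup.of 0 ^ k ∈ rels := Set.mem_insert_of_mem _ (Set.mem_insert _ _)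
  have hr3 : (FreeGroup.of 0)⁻¹ * FreeGroup.of 1 * FreeGroup.of 0 * (FreeGroup.of 1 ^ v)⁻¹
      ∈ rels := Set.mem_insert_of_mem _ (Set.mem_insert_of_mem _ rfl)
  have relone : ∀ r ∈ rels, PresentedGroup.mk rels r = 1 := fun r hr =>
    (QuotientGroup.eq_one_iff _).mpr (Subgroup.subset_normalClosure hr)
  have ha_k : a ^ k = 1 := by
    have h0 := relone _ hr2
    rw [map_pow] at h0
    exact h0
  have hh_q : h ^ q = 1 := by
    have h0 := relone _ hr1
    rw [map_pow] at h0
    exact h0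
  have hrel : a⁻¹ * h * a = h ^ v := by
    have h0 := relone _ hr3
    rw [map_mul, map_mul, map_mul, map_inv, map_inv, map_pow, mul_inv_eq_one] at h0
    exact h0
  -- generation
  have habh : a * (a⁻¹ * h) = h := mul_inv_cancel_left a h
  have htopah : Subgroup.closure ({a, h} : Set G) = ⊤ := by
    rw [eq_top_iff, ← PresentedGroup.closure_range_of rels]
    refine (Subgroup.closure_le _).mpr ?_
    rintro x ⟨i, rfl⟩
    fin_cases i
    · exact Subgroup.subset_closure (Set.mem_insert _ _)
    · exact Subgroup.subset_closure (Set.mem_insert_of_mem _ rfl)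
  have htop : Subgroup.closure ({a, a⁻¹ * h} : Set G) = ⊤ := by
    rw [eq_top_iff, ← htopah]
    refine (Subgroup.closure_le _).mpr ?_
    rintro x (rfl | rfl)
    · exact Subgroup.subset_closure (Set.mem_insert _ _)
    · have hmem : a * (a⁻¹ * h) ∈ Subgroup.closure ({a, a⁻¹ * h} : Set G) :=
        Subgroup.mul_mem _ (Subgroup.subset_closure (Set.mem_insert _ _))
          (Subgroup.subset_closure (Set.mem_insert_of_mem _ rfl))
      rwa [habh] at hmem
  -- the homomorphism to C_k
  set f : Fin 2 → Multiplicative (ZMod k) := ![Multiplicative.ofAdd 1, 1] with hf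
  have hfcond : ∀ r ∈ rels, FreeGroup.lift f r = 1 := by
    intro r hr
    rw [hrels, semidirectRels] at hr
    simp only [Set.mem_insert_iff, Set.mem_singleton_iff] at hr
    rcases hr with rfl | rfl | rfl
    · rw [map_pow, FreeGroup.lift_apply_of]
      simp [hf]
    · rw [map_pow, FreeGroup.lift_apply_of]
      show (![Multiplicative.ofAdd 1, 1] : Fin 2 → Multiplicative (ZMod k)) 0 ^ k = 1
      simp only [Matrix.cons_val_zero]
      rw [← ofAdd_nsmul, nsmul_eq_mul, mul_one, ZMod.natCast_self, ofAdd_zero]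
    · rw [map_mul, map_mul, map_mul, map_inv, map_inv, map_pow, FreeGroup.lift_apply_of,
        FreeGroup.lift_apply_of]
      simp [hf, mul_comm]
  set π : G →* Multiplicative (ZMod k) := PresentedGroup.toGroup hfcond with hπ
  have hπa : π a = Multiplicative.ofAdd 1 := PresentedGroup.toGroup.of hfcond (x := 0)
  have hπh : π h = 1 := PresentedGroup.toGroup.of hfcond (x := 1)
  have hπb : π (a⁻¹ * h) = (Multiplicative.ofAdd (1 : ZMod k))⁻¹ := by
    rw [map_mul, map_inv, hπa, hπh, mul_one]
  have hπs : Function.Surjective π := by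
    intro y
    refine ⟨a ^ (Multiplicative.toAdd y).val, ?_⟩
    rw [map_pow, hπa, ← ofAdd_nsmul, nsmul_eq_mul, mul_one, ZMod.natCast_val, ZMod.cast_id,
      ofAdd_toAdd]
  set N : Subgroup G := π.ker with hN
  haveI hNn : N.Normal := MonoidHom.normal_ker π
  let e : (G ⧸ N) ≃* Multiplicative (ZMod k) :=
    QuotientGroup.quotientKerEquivOfSurjective π hπs
  have he : ∀ x : G, e (QuotientGroup.mk x) = π x := fun x => QuotientGroup.kerLift_mk π x
  refine ⟨htop, N, hNn, ?_, ?_, ⟨e⟩, ?_, ?_⟩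
  · -- swap induces automorphism of G ⧸ N
    show ∃ φ : (G ⧸ N) ≃* (G ⧸ N),
      φ (QuotientGroup.mk a) = QuotientGroup.mk (a⁻¹ * h) ∧
      φ (QuotientGroup.mk (a⁻¹ * h)) = QuotientGroup.mk a
    refine ⟨(e.trans (MulEquiv.inv _)).trans e.symm, ?_, ?_⟩
    · rw [MulEquiv.trans_apply, MulEquiv.trans_apply, MulEquiv.inv_apply, he, hπa,
        ← hπb, ← he, MulEquiv.symm_apply_apply]
    · rw [MulEquiv.trans_apply, MulEquiv.trans_apply, MulEquiv.inv_apply, he, hπb, inv_inv,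
        ← hπa, ← he, MulEquiv.symm_apply_apply]
  · -- minimality
    intro M hM hswap
    obtain ⟨ψ, hψa, hψb⟩ := hswap
    letI := hM
    set mm : G →* G ⧸ M := QuotientGroup.mk' M with hmm
    have hA : (mm a) ^ k = 1 := by rw [← map_pow, ha_k, map_one]
    have hQ : (mm h) ^ q = 1 := by rw [← map_pow, hh_q, map_one]
    have hR : (mm a)⁻¹ * mm h * mm a = (mm h) ^ v := by
      rw [← map_inv, ← map_mul, ← map_mul, ← map_pow, hrel]
    have hψa' : ψ (mm a) = (mm a)⁻¹ * mm h := by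
      rw [show (mm a)⁻¹ * mm h = mm (a⁻¹ * h) by rw [map_mul, map_inv]]
      exact hψa
    have hψb' : ψ ((mm a)⁻¹ * mm h) = mm a := by
      rw [show (mm a)⁻¹ * mm h = mm (a⁻¹ * h) by rw [map_mul, map_inv]]
      exact hψb
    have hkey := aux_swap hk1 hA hR ψ hψa' hψb'
    -- conclude mm h = 1
    have hvk2 : v * v ≤ v ^ k := by
      calc v * v = v ^ 2 := (sq v).symm
        _ ≤ v ^ k := Nat.pow_le_pow_right hv1 (by omega)
    have hdiff : (mm h) ^ (v ^ k - v * v) = 1 := by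
      have h2 := hkey
      rw [← Nat.sub_add_cancel hvk2, pow_add] at h2
      have h3 : (mm h) ^ (v ^ k - v * v) * (mm h) ^ (v * v)
          = 1 * (mm h) ^ (v * v) := by rw [h2, one_mul]
      exact mul_right_cancel h3
    have hbar : mm h = 1 := by
      have hdvd1 : orderOf (mm h) ∣ q := orderOf_dvd_of_pow_eq_one hQ
      have hdvd2 : orderOf (mm h) ∣ (v ^ k - v * v) := orderOf_dvd_of_pow_eq_one hdiff
      rcases hq.eq_one_or_self_of_dvd _ hdvd1 with h1 | hqq
      · exact orderOf_eq_one_iff.mp h1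
      · exfalso
        have hd : q ∣ v ^ k - v * v := hqq ▸ hdvd2
        have hz : ((v ^ k - v * v : ℕ) : ZMod q) = 0 :=
          (ZMod.natCast_eq_zero_iff _ _).mpr hd
        rw [Nat.cast_sub hvk2, Nat.cast_pow, Nat.cast_mul, hvq, sub_eq_zero] at hz
        have huk : ((u : ZMod q)) ^ k = 1 := by
          rw [← Units.val_pow_eq_pow_val, ← hu, pow_orderOf_eq_one, Units.val_one]
        have hu2 : u ^ 2 = 1 := by
          apply Units.ext
          rw [Units.val_pow_eq_pow_val, Units.val_one, sq, ← hz, ← huk]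
        have : orderOf u ∣ 2 := orderOf_dvd_of_pow_eq_one hu2
        rw [hu] at this
        have := Nat.le_of_dvd (by norm_num) this
        omega
    have hhM : h ∈ M := (QuotientGroup.eq_one_iff h).mp hbar
    intro x hx
    obtain ⟨j, m, rfl⟩ := aux_nf hk1 ha_k hrel x (htopah ▸ Subgroup.mem_top x)
    have hx1 : π (a ^ j * h ^ m) = 1 := hx
    rw [map_mul, map_pow, map_zpow, hπa, hπh, one_zpow, mul_one, ← ofAdd_nsmul,
      nsmul_eq_mul, mul_one, ofAdd_eq_one] at hx1
    obtain ⟨t, rfl⟩ := (ZMod.natCast_eq_zero_iff _ _).mp hx1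
    have haj : a ^ (k * t) = 1 := by rw [pow_mul, ha_k, one_pow]
    rw [haj, one_mul]
    exact Subgroup.zpow_mem M hhM m
  · -- index
    calc N.index = Nat.card (G ⧸ N) := rfl
      _ = Nat.card (Multiplicative (ZMod k)) := Nat.card_congr e.toEquiv
      _ = Nat.card (ZMod k) := Nat.card_congr Multiplicative.toAdd
      _ = k := Nat.card_zmod k
  · -- N ≠ ⊥
    set A : Equiv.Perm (ZMod q) :=
      Equiv.mulLeft₀ ((u⁻¹ : (ZMod q)ˣ) : ZMod q) (Units.ne_zero _) with hA
    set T : Equiv.Perm (ZMod q) := Equiv.addRight (1 : ZMod q) with hT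
    have hTapp : ∀ x : ZMod q, T x = x + 1 := fun x => rfl
    have hAapp : ∀ x : ZMod q, A x = ((u⁻¹ : (ZMod q)ˣ) : ZMod q) * x := fun x => rfl
    have hTpow : ∀ (n : ℕ), T ^ n = Equiv.addRight ((n : ZMod q)) := by
      intro n
      induction n with
      | zero => ext x; simp
      | succ i ih =>
        rw [pow_succ, ih]
        ext x
        rw [Equiv.Perm.mul_apply, hTapp, Equiv.coe_addRight, Equiv.coe_addRight, Nat.cast_succ]
        ring
    have hApow : ∀ (n : ℕ) (x : ZMod q), (A ^ n) x
        = ((u⁻¹ : (ZMod q)ˣ) : ZMod q) ^ n * x := by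
      intro n
      induction n with
      | zero => intro x; rw [pow_zero, pow_zero, one_mul]; rfl
      | succ i ih =>
        intro x
        rw [pow_succ, Equiv.Perm.mul_apply, hAapp, ih, ← mul_assoc, ← pow_succ]
    set fσ : Fin 2 → Equiv.Perm (ZMod q) := ![A, T] with hfσ
    have hATA : T * A = A * T ^ v := by
      ext x
      rw [Equiv.Perm.mul_apply, Equiv.Perm.mul_apply, hTapp, hAapp, hTpow,
        hAapp, Equiv.coe_addRight, mul_add]
      congr 1
      rw [hvq, ← Units.val_mul, inv_mul_cancel, Units.val_one]
    have hfσcond : ∀ r ∈ rels, FreeGroup.lift fσ r = 1 := by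
      intro r hr
      rw [hrels, semidirectRels] at hr
      simp only [Set.mem_insert_iff, Set.mem_singleton_iff] at hr
      rcases hr with rfl | rfl | rfl
      · rw [map_pow, FreeGroup.lift_apply_of]
        show T ^ q = 1
        rw [hTpow, ZMod.natCast_self, Equiv.addRight_zero]
      · rw [map_pow, FreeGroup.lift_apply_of]
        show A ^ k = 1
        ext x
        rw [hApow, ← Units.val_pow_eq_pow_val, inv_pow, ← hu, pow_orderOf_eq_one, inv_one,
          Units.val_one, one_mul]
        rfl
      · rw [map_mul, map_mul, map_mul, map_inv, map_inv, map_pow, FreeGroup.lift_apply_of,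
          FreeGroup.lift_apply_of]
        show A⁻¹ * T * A * (T ^ v)⁻¹ = 1
        calc A⁻¹ * T * A * (T ^ v)⁻¹ = A⁻¹ * (T * A) * (T ^ v)⁻¹ := by group
          _ = A⁻¹ * (A * T ^ v) * (T ^ v)⁻¹ := by rw [hATA]
          _ = 1 := by group
    set σ : G →* Equiv.Perm (ZMod q) := PresentedGroup.toGroup hfσcond with hσ
    have hσh : σ h = T := PresentedGroup.toGroup.of hfσcond (x := 1)
    have hT1 : T ≠ 1 := by
      intro hT1
      have h0 : T 0 = (1 : Equiv.Perm (ZMod q)) 0 := by rw [hT1]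
      rw [hTapp, Equiv.Perm.one_apply, zero_add] at h0
      exact one_ne_zero h0
    have hh1 : h ≠ 1 := by
      intro hh1
      exact hT1 (by rw [← hσh, hh1, map_one])
    intro hbot
    have hhN : h ∈ N := by
      show π h = 1
      exact hπh
    rw [hbot, Subgroup.mem_bot] at hhN
    exact hh1 hhN
end

section
/- For every positive integer d there is a finite group G with a generating pair (a, b) such that the smallest normal subgroup N of G for which swapping a and b induces an automorphism of G/N is all of G and |G| = d. (Concretely: G = C_d = ⟨g⟩ with a = g, b = 1, provided d > 1; this gives extreme duality index d.) -/
/-- For every positive integer `d` there is a finite group `G` of order `d` with a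
generating pair `(a, b)` such that the smallest normal subgroup `N` of `G` for which
swapping `a` and `b` induces an automorphism of `G ⧸ N` is all of `G`
(extreme duality index `d`). -/
theorem stmt_7 (d : ℕ) (hd : 0 < d) :
    ∃ (G : Type) (_ : Group G) (_ : Finite G) (a b : G),
      Subgroup.closure {a, b} = (⊤ : Subgroup G) ∧ Nat.card G = d ∧
      ∀ (M : Subgroup G) (hM : M.Normal), swapInducesAut a b M hM → M = ⊤ := by
  haveI : NeZero d := ⟨hd.ne'⟩
  refine ⟨Multiplicative (ZMod d), inferInstance, inferInstance,
    Multiplicative.ofAdd 1, 1, ?_, ?_, ?_⟩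
  · rw [eq_top_iff]
    intro x _
    have : x = (Multiplicative.ofAdd (1 : ZMod d)) ^ (Multiplicative.toAdd x).val := by
      have : ((Multiplicative.toAdd x).val : ZMod d) • (1 : ZMod d) =
          Multiplicative.toAdd x := by simp
      simp only [← ofAdd_nsmul]
      rw [show ((Multiplicative.toAdd x).val • (1 : ZMod d)) = Multiplicative.toAdd x by
        simpa using this, ofAdd_toAdd]
    rw [this]
    exact pow_mem (Subgroup.subset_closure (by simp)) _
  · simp [Nat.card_eq_fintype_card]
  · intro M hM ⟨φ, h1, h2⟩
    have hφ1 : φ 1 = 1 := map_one φ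
    have ha : (QuotientGroup.mk (Multiplicative.ofAdd (1 : ZMod d)) : _ ⧸ M) = 1 := by
      have : φ (QuotientGroup.mk (1 : Multiplicative (ZMod d))) =
          QuotientGroup.mk (Multiplicative.ofAdd (1 : ZMod d)) := h2
      rw [show (QuotientGroup.mk (1 : Multiplicative (ZMod d)) : _ ⧸ M) = 1 from rfl,
        hφ1] at this
      exact this.symm
    have haM : Multiplicative.ofAdd (1 : ZMod d) ∈ M := by
      rwa [QuotientGroup.eq_one_iff] at ha
    rw [eq_top_iff]
    intro x _
    have : x = (Multiplicative.ofAdd (1 : ZMod d)) ^ (Multiplicative.toAdd x).val := by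
      simp only [← ofAdd_nsmul]
      rw [show ((Multiplicative.toAdd x).val • (1 : ZMod d)) = Multiplicative.toAdd x by
        simp, ofAdd_toAdd]
    rw [this]
    exact pow_mem haM _
end

section
/- In a group, if elements x and y satisfy x⁻¹yx = y⁻¹ and y⁻¹xy = x⁻¹, then x^{n+2} = 1 whenever xⁿ = y². -/
/-- In a group, if `x⁻¹yx = y⁻¹` and `y⁻¹xy = x⁻¹`, then `xⁿ = y²` implies `x^(n+2) = 1`. -/
theorem stmt_12 {G : Type*} [Group G] (x y : G) (n : ℕ)
    (h1 : x⁻¹ * y * x = y⁻¹) (h2 : y⁻¹ * x * y = x⁻¹) (h3 : x ^ n = y ^ 2) :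
    x ^ (n + 2) = 1 := by
  have ha : y * x = x * y⁻¹ := by
    have := congrArg (fun g => x * g) h1; simpa [mul_assoc] using this
  have hb : x * y = y * x⁻¹ := by
    have := congrArg (fun g => y * g) h2; simpa [mul_assoc] using this
  have : x ^ (n+2) = x * x ^ n * x := by group
  rw [this, h3]
  calc x * y ^ 2 * x = (x * y) * (y * x) := by rw [sq]; group
    _ = (y * x⁻¹) * (x * y⁻¹) := by rw [ha, hb]
    _ = 1 := by group
end

section
/- Every generating pair of the quaternion group Q₈ can be interchanged by an automorphism of Q₈; i.e., for all a, b with ⟨a, b⟩ = Q₈ there exists φ ∈ Aut(Q₈) with φ(a) = b and φ(b) = a. -/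
/-- swap map for a noncommuting pair -/
def swapFun (a b x : QuaternionGroup 2) : QuaternionGroup 2 :=
  if x = a then b else if x = b then a
  else if x = a⁻¹ then b⁻¹ else if x = b⁻¹ then a⁻¹
  else if x = a*b then b*a else if x = b*a then a*b else x

lemma swap_invol' : ∀ a b : QuaternionGroup 2, a*b ≠ b*a →
    ∀ x, swapFun a b (swapFun a b x) = x := by decide

lemma swap_invol (a b : QuaternionGroup 2) (h : a*b ≠ b*a) :
    Function.Involutive (swapFun a b) := swap_invol' a b h

lemma swap_mul : ∀ a b : QuaternionGroup 2, a*b ≠ b*a →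
    ∀ x y, swapFun a b (x*y) = swapFun a b x * swapFun a b y := by decide

/-- Every generating pair of the quaternion group `Q₈` can be interchanged by an
automorphism: `Q₈` is strongly self-dual. -/
theorem stmt_16 (a b : QuaternionGroup 2)
    (hab : Subgroup.closure {a, b} = (⊤ : Subgroup (QuaternionGroup 2))) :
    ∃ φ : QuaternionGroup 2 ≃* QuaternionGroup 2, φ a = b ∧ φ b = a := by
  have hne : a * b ≠ b * a := by
    intro h
    have hsub : Subgroup.closure {a, b} ≤ Subgroup.centralizer {a, b} := by
      rw [Subgroup.closure_le]
      intro x hx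
      rw [SetLike.mem_coe, Subgroup.mem_centralizer_iff]
      rcases hx with rfl | rfl <;> rintro y (rfl | rfl) <;> simp [h]
    rw [hab, top_le_iff] at hsub
    have hcomm : ∀ g : QuaternionGroup 2, g * a = a * g ∧ g * b = b * g := by
      intro g
      have hg : g ∈ Subgroup.centralizer ({a, b} : Set (QuaternionGroup 2)) := by
        rw [hsub]; trivial
      rw [Subgroup.mem_centralizer_iff] at hg
      exact ⟨(hg a (by simp)).symm, (hg b (by simp)).symm⟩
    -- a and b are central, so closure {a,b} ≤ center, but closure = ⊤ and Q8 nonabelian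
    have ha : a ∈ Subgroup.center (QuaternionGroup 2) := by
      rw [Subgroup.mem_center_iff]; intro g; exact (hcomm g).1
    have hb : b ∈ Subgroup.center (QuaternionGroup 2) := by
      rw [Subgroup.mem_center_iff]; intro g; exact (hcomm g).2
    have : Subgroup.closure ({a, b} : Set (QuaternionGroup 2)) ≤ Subgroup.center _ := by
      rw [Subgroup.closure_le]; rintro x (rfl | rfl) <;> assumption
    rw [hab, top_le_iff] at this
    have := this.symm.le (Subgroup.mem_top (QuaternionGroup.xa 0 : QuaternionGroup 2))
    rw [Subgroup.mem_center_iff] at this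
    exact absurd (this (QuaternionGroup.a 1)) (by decide)
  refine ⟨MulEquiv.mk' ((swap_invol a b hne).toPerm _) (swap_mul a b hne), ?_, ?_⟩
  · show swapFun a b a = b
    simp [swapFun]
  · show swapFun a b b = a
    have : b ≠ a := by rintro rfl; exact hne rfl
    simp [swapFun, this]
end

section
/- Any two generating pairs of the quaternion group Q₈ are equivalent under Aut(Q₈): if ⟨a, b⟩ = Q₈ = ⟨c, d⟩ then there is an automorphism φ of Q₈ with φ(a) = c and φ(b) = d. Hence up to isomorphism there is exactly one oriented regular hypermap with monodromy group Q₈. -/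
namespace Stmt17Aux

abbrev Q := QuaternionGroup 2

/-- `y` is a power of `x` with small exponent (decidable). -/
def E (x y : Q) : Prop := ∃ i, i < 8 ∧ x ^ i = y

instance (x y : Q) : Decidable (E x y) := by unfold E; infer_instance

lemma E_of_mem_zpowers {x y : Q} (h : y ∈ Subgroup.zpowers x) : E x y := by
  obtain ⟨k, hk⟩ := Subgroup.mem_zpowers_iff.mp h
  have h8 : ∀ z : Q, z ^ (8 : ℕ) = 1 := by decide
  have h8z : x ^ (8 : ℤ) = 1 := by exact_mod_cast h8 x
  have hnn : 0 ≤ k % 8 := Int.emod_nonneg k (by norm_num)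
  have hlt : k % 8 < 8 := Int.emod_lt_of_pos k (by norm_num)
  refine ⟨(k % 8).toNat, by omega, ?_⟩
  have : x ^ ((k % 8).toNat : ℤ) = x ^ k := by
    rw [Int.toNat_of_nonneg hnn]
    conv_rhs => rw [← Int.emod_add_mul_ediv k 8]
    rw [zpow_add, zpow_mul, h8z, one_zpow, mul_one]
  rw [← hk, ← this, zpow_natCast]

lemma mem_zpowers_of_E {x y : Q} (h : E x y) : y ∈ Subgroup.zpowers x := by
  obtain ⟨i, _, hi⟩ := h
  exact Subgroup.mem_zpowers_iff.mpr ⟨(i : ℤ), by rw [zpow_natCast]; exact hi⟩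

/-- Decidable reformulation of "p, q generate". -/
def D (p q : Q) : Prop := ∀ x : Q, E x p → E x q → ∀ y : Q, E x y

instance (p q : Q) : Decidable (D p q) := by unfold D; infer_instance

lemma D_of_closure {p q : Q}
    (h : Subgroup.closure {p, q} = (⊤ : Subgroup Q)) : D p q := by
  intro x hxp hxq y
  have hle : Subgroup.closure {p, q} ≤ Subgroup.zpowers x := by
    rw [Subgroup.closure_le]
    rintro z (rfl | rfl)
    · exact mem_zpowers_of_E hxp
    · exact mem_zpowers_of_E hxq
  rw [h] at hle
  exact E_of_mem_zpowers (hle (Subgroup.mem_top y))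

/-- The relations satisfied by any generating pair. -/
def R (p q : Q) : Prop :=
  p ^ 4 = 1 ∧ q * q = p ^ 2 ∧ q * p = p ^ 3 * q ∧
    ∀ y : Q, ∃ i, i < 4 ∧ (p ^ i = y ∨ q * p ^ i = y)

instance (p q : Q) : Decidable (R p q) := by unfold R; infer_instance

lemma R_of_D : ∀ p q : Q, D p q → R p q := by decide

section
variable {p q : Q} (h : R p q)
include h

lemma hpmod : ∀ m n : ℕ, m % 4 = n % 4 → p ^ m = p ^ n := by
  have key : ∀ m : ℕ, p ^ m = p ^ (m % 4) := by
    intro m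
    conv_lhs => rw [← Nat.div_add_mod m 4]
    rw [pow_add, pow_mul, h.1, one_pow, one_mul]
  intro m n hmn
  rw [key m, key n, hmn]

lemma hpq : p * q = q * p ^ 3 := by
  have h5 : p * (q * p) = q := by
    rw [h.2.2.1, ← mul_assoc, ← pow_succ', h.1, one_mul]
  have hinv : p⁻¹ = p ^ 3 := by
    apply inv_eq_of_mul_eq_one_right
    rw [← pow_succ', h.1]
  calc p * q = p * (q * p) * p⁻¹ := by group
    _ = q * p ^ 3 := by rw [h5, hinv]

lemma hcomm : ∀ m : ℕ, p ^ m * q = q * p ^ (3 * m) := by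
  intro m
  induction m with
  | zero => simp
  | succ m ih =>
    rw [pow_succ', mul_assoc, ih, ← mul_assoc, hpq h, mul_assoc, ← pow_add]
    rw [Nat.mul_succ]
    ring_nf

/-- The candidate automorphism sending `a 1 ↦ p`, `xa 0 ↦ q`. -/
def g (p q : Q) : Q → Q
  | .a i => p ^ i.val
  | .xa i => q * p ^ i.val

lemma g_mul (x y : Q) : g p q (x * y) = g p q x * g p q y := by
  rcases x with i | i <;> rcases y with j | j <;>
    simp only [QuaternionGroup.a_mul_a, QuaternionGroup.a_mul_xa,
      QuaternionGroup.xa_mul_a, QuaternionGroup.xa_mul_xa, g]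
  · rw [← pow_add]
    exact hpmod h _ _ (by revert i j; decide)
  · rw [← mul_assoc, hcomm h i.val, mul_assoc, ← pow_add]
    congr 1
    exact hpmod h _ _ (by revert i j; decide)
  · rw [mul_assoc, ← pow_add]
    congr 1
    exact hpmod h _ _ (by revert i j; decide)
  · rw [mul_assoc, ← mul_assoc (p ^ i.val), hcomm h i.val, ← mul_assoc, ← mul_assoc,
      h.2.1, mul_assoc, ← pow_add, ← pow_add]
    exact hpmod h _ _ (by revert i j; decide)

lemma g_surj : Function.Surjective (g p q) := by
  intro y
  obtain ⟨i, hi, hy | hy⟩ := h.2.2.2 y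
  · exact ⟨.a (i : ZMod (2 * 2)), by simp only [g]; rw [ZMod.val_cast_of_lt (by norm_num; omega)]; exact hy⟩
  · exact ⟨.xa (i : ZMod (2 * 2)), by simp only [g]; rw [ZMod.val_cast_of_lt (by norm_num; omega)]; exact hy⟩

/-- Build the automorphism. -/
noncomputable def φ : Q ≃* Q :=
  MulEquiv.ofBijective (MonoidHom.mk' (g p q) (g_mul h))
    ⟨Finite.injective_iff_surjective.mpr (g_surj h), g_surj h⟩

lemma φ_a1 : φ h (.a 1) = p := by
  show g p q (.a 1) = p
  simp only [g]
  rw [show ZMod.val (1 : ZMod (2*2)) = 1 by decide, pow_one]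

lemma φ_xa0 : φ h (.xa 0) = q := by
  show g p q (.xa 0) = q
  simp only [g, ZMod.val_zero, pow_zero, mul_one]

end

lemma exists_hom {p q : Q} (h : D p q) :
    ∃ φ : Q ≃* Q, φ (.a 1) = p ∧ φ (.xa 0) = q := by
  have hR := R_of_D p q h
  exact ⟨φ hR, φ_a1 hR, φ_xa0 hR⟩

end Stmt17Aux

/-- Any two generating pairs of the quaternion group `Q₈` are equivalent under an
automorphism; hence there is exactly one oriented regular hypermap with monodromy
group `Q₈` up to isomorphism. -/
theorem stmt_17 (a b c d : QuaternionGroup 2)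
    (hab : Subgroup.closure {a, b} = (⊤ : Subgroup (QuaternionGroup 2)))
    (hcd : Subgroup.closure {c, d} = (⊤ : Subgroup (QuaternionGroup 2))) :
    ∃ φ : QuaternionGroup 2 ≃* QuaternionGroup 2, φ a = c ∧ φ b = d := by
  obtain ⟨φ₁, h1a, h1b⟩ := Stmt17Aux.exists_hom (Stmt17Aux.D_of_closure hab)
  obtain ⟨φ₂, h2c, h2d⟩ := Stmt17Aux.exists_hom (Stmt17Aux.D_of_closure hcd)
  refine ⟨φ₁.symm.trans φ₂, ?_, ?_⟩
  · simp [← h1a, ← h2c]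
  · simp [← h1b, ← h2d]
end
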